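/- arXiv:1411.3113 — 3 statements merged into one kernel-verified Lean document; each statement's English description precedes it below -/
import Mathlib

section
/- Assume F > 0 and set K = 2JF². The ball B = {u ∈ ℝ^J : |u|² ≤ K} is absorbing for the Lorenz '96 equation: for every solution u on [0,∞) (with arbitrary initial condition u(0) ∈ ℝ^J) there exists a time T ≥ 0 such that |u(t)|² ≤ K for all t ≥ T. -/
open scoped RealInnerProductSpace

noncomputable section

/-- The Lorenz '96 bilinear map `B` on `ℝ^J`, with cyclic indexing via `ZMod J`:
`B(u,w)^(j) = -(1/2)[w^(j-1)u^(j+1) + u^(j-1)w^(j+1) - w^(j-2)u^(j-1) - u^(j-2)w^(j-1)]`. -/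
def L96B {J : ℕ} [NeZero J] (u w : EuclideanSpace ℝ (ZMod J)) :
    EuclideanSpace ℝ (ZMod J) :=
  WithLp.toLp 2 (fun j => -(1/2 : ℝ) * (w (j - 1) * u (j + 1) + u (j - 1) * w (j + 1)
    - w (j - 2) * u (j - 1) - u (j - 2) * w (j - 1)))

/-- The constant forcing vector `f = (F, ..., F)`. -/
def L96f {J : ℕ} [NeZero J] (F : ℝ) : EuclideanSpace ℝ (ZMod J) := WithLp.toLp 2 (fun _ => F)

/-- `u` solves the Lorenz '96 equation `u' = -u - B(u,u) + f` on the set `I`. -/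
def L96Sol {J : ℕ} [NeZero J] (F : ℝ) (I : Set ℝ)
    (u : ℝ → EuclideanSpace ℝ (ZMod J)) : Prop :=
  ∀ t ∈ I, HasDerivAt u (-u t - L96B (u t) (u t) + L96f F) t

/-- The projection `P` setting to zero every third coordinate
(those with 1-based index `≡ 0 mod 3`, i.e. `ZMod J`-index with value `≡ 0 mod 3`
when `3 ∣ J`). -/
def L96P {J : ℕ} [NeZero J] (u : EuclideanSpace ℝ (ZMod J)) :
    EuclideanSpace ℝ (ZMod J) :=
  WithLp.toLp 2 (fun j => if j.val % 3 = 0 then 0 else u j)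

/-- The complementary projection `Q = I - P`. -/
def L96Q {J : ℕ} [NeZero J] (u : EuclideanSpace ℝ (ZMod J)) :
    EuclideanSpace ℝ (ZMod J) :=
  u - L96P u

/-!
The nonlinearity conserves energy: `⟪u, B(u,u)⟫ = 0`, because the cubic sum
`∑ u^(j-2) u^(j-1) u^(j) - u^(j-1) u^(j) u^(j+1)` cancels under the cyclic shift `j ↦ j - 1`.
Hence `d/dt |u|² = 2⟪u, f - u⟫ ≤ |f|² - |u|² = JF² - |u|²`, and Grönwall gives
`|u(t)|² ≤ JF² + (|u(0)|² - JF²) e^{-t}`, which is at most `2JF²` for large `t`.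
-/

open Filter Real Set Topology

theorem inner_L96B_self {J : ℕ} [NeZero J] (u : EuclideanSpace ℝ (ZMod J)) :
    ⟪u, L96B u u⟫ = 0 := by
  have hshift : ∑ j, u (j - 2) * u (j - 1) * u j = ∑ j, u (j - 1) * u j * u (j + 1) :=
    Fintype.sum_equiv (Equiv.subRight 1) _ _ fun j => by
      simp only [Equiv.subRight_apply, sub_add_cancel, sub_sub, one_add_one_eq_two]
  simp only [PiLp.inner_apply, RCLike.inner_apply, conj_trivial, L96B]
  calc ∑ j, _ = ∑ j, (u (j - 2) * u (j - 1) * u j - u (j - 1) * u j * u (j + 1)) :=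
        Finset.sum_congr rfl fun j _ => by ring
    _ = 0 := by rw [Finset.sum_sub_distrib, hshift, sub_self]

theorem norm_L96f_sq {J : ℕ} [NeZero J] (F : ℝ) :
    ‖(L96f F : EuclideanSpace ℝ (ZMod J))‖ ^ 2 = J * F ^ 2 := by
  rw [EuclideanSpace.norm_sq_eq]
  simp [L96f, sq]

theorem two_mul_inner_L96_field_le {J : ℕ} [NeZero J] (F : ℝ) (u : EuclideanSpace ℝ (ZMod J)) :
    2 * ⟪u, -u - L96B u u + L96f F⟫ ≤ J * F ^ 2 - ‖u‖ ^ 2 := by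
  rw [inner_add_right, inner_sub_right, inner_neg_right, real_inner_self_eq_norm_sq,
    inner_L96B_self, ← norm_L96f_sq F]
  linarith [real_inner_le_norm u (L96f F),
    two_mul_le_add_sq ‖u‖ ‖(L96f F : EuclideanSpace ℝ (ZMod J))‖]

theorem le_add_mul_exp_neg_of_deriv_le {g g' : ℝ → ℝ} {C : ℝ}
    (hg : ∀ t ∈ Ici (0 : ℝ), HasDerivAt g (g' t) t) (bound : ∀ t ∈ Ici (0 : ℝ), g' t ≤ C - g t)
    {t : ℝ} (ht : 0 ≤ t) : g t ≤ C + (g 0 - C) * exp (-t) := by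
  have hgron := le_gronwallBound_of_liminf_deriv_right_le (K := -1) (ε := C) (b := t)
    (fun x hx => (hg x hx.1).continuousAt.continuousWithinAt)
    (fun x hx _ hr => (hg x hx.1).hasDerivWithinAt.liminf_right_slope_le hr) le_rfl
    (fun x hx => by linarith [bound x hx.1]) t ⟨ht, le_rfl⟩
  rw [gronwallBound_of_K_ne_0 (by norm_num)] at hgron
  convert hgron using 1
  ring_nf

theorem exists_forall_ge_le_two_mul_of_deriv_le {g g' : ℝ → ℝ} {C : ℝ} (hC : 0 < C)
    (hg : ∀ t ∈ Ici (0 : ℝ), HasDerivAt g (g' t) t) (bound : ∀ t ∈ Ici (0 : ℝ), g' t ≤ C - g t) :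
    ∃ T, 0 ≤ T ∧ ∀ t, T ≤ t → g t ≤ 2 * C := by
  have hdecay : Tendsto (fun t => (g 0 - C) * exp (-t)) atTop (𝓝 0) := by
    simpa using tendsto_exp_neg_atTop_nhds_zero.const_mul (g 0 - C)
  obtain ⟨T, hT⟩ := eventually_atTop.1 (hdecay.eventually (eventually_le_nhds hC))
  refine ⟨max T 0, le_max_right _ _, fun t ht => ?_⟩
  linarith [le_add_mul_exp_neg_of_deriv_le hg bound (le_of_max_le_right ht),
    hT t (le_of_max_le_left ht)]

theorem l96_absorbing_ball_general {J : ℕ} [NeZero J] (F : ℝ) (hF : 0 < F)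
    (u : ℝ → EuclideanSpace ℝ (ZMod J)) (hu : L96Sol F (Set.Ici 0) u) :
    ∃ T : ℝ, 0 ≤ T ∧ ∀ t : ℝ, T ≤ t → ‖u t‖ ^ 2 ≤ 2 * J * F ^ 2 := by
  obtain ⟨T, hT0, hT⟩ := exists_forall_ge_le_two_mul_of_deriv_le
    (mul_pos (Nat.cast_pos.2 (NeZero.pos J)) (pow_pos hF 2))
    (fun t ht => (hu t ht).norm_sq) fun t _ => two_mul_inner_L96_field_le F (u t)
  exact ⟨T, hT0, fun t ht => (hT t ht).trans_eq (by ring)⟩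

/-- the ball `{u : |u|² ≤ K}`, `K = 2JF²`, is absorbing for Lorenz '96. -/
theorem l96_absorbing_ball {J : ℕ} [NeZero J] (hJ : 3 ≤ J) (F : ℝ) (hF : 0 < F)
    (u : ℝ → EuclideanSpace ℝ (ZMod J)) (hu : L96Sol F (Set.Ici 0) u) :
    ∃ T : ℝ, 0 ≤ T ∧ ∀ t : ℝ, T ≤ t → ‖u t‖ ^ 2 ≤ 2 * J * F ^ 2 :=
  l96_absorbing_ball_general F hF u hu
end
end

section
/- There exists a constant c > 0 (for instance c = 2√5) such that for all u, w ∈ ℝ^J one has |⟨B(u,u), w⟩| ≤ c·|u|·|w|·|Pu|. -/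
open scoped RealInnerProductSpace

noncomputable section

/-!
Expanding, `B(u,u)^(j) = u^(j-2) u^(j-1) - u^(j-1) u^(j+1)`. Each product pairs two indices
differing by `1` or `2`; since `3 ∣ J`, residues mod 3 are well defined on `ZMod J`, so at most
one of the two indices is a multiple of 3 and the other coordinate survives `P`. Hence
`|u^(a) u^(b)| ≤ |u| (|(Pu)^(a)| + |(Pu)^(b)|)`, and pairing with `|w^(j)|` and applying
Cauchy–Schwarz to each cyclically shifted sum gives the estimate with `c = 4`.
-/

namespace EuclideanSpace

variable {ι : Type*} [Fintype ι]

lemma abs_inner_le_sum_abs_mul_abs (x y : EuclideanSpace ℝ ι) :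
    |⟪x, y⟫| ≤ ∑ i, |x i| * |y i| := by
  rw [PiLp.inner_apply]
  refine (Finset.abs_sum_le_sum_abs _ _).trans_eq (Finset.sum_congr rfl fun i _ => ?_)
  simp [abs_mul, mul_comm]

lemma sum_abs_comp_mul_abs_le (v w : EuclideanSpace ℝ ι) (e : ι ≃ ι) :
    ∑ i, |v (e i)| * |w i| ≤ ‖v‖ * ‖w‖ := by
  have hv : ∑ i, |v (e i)| ^ 2 = ∑ i, ‖v i‖ ^ 2 :=
    e.sum_comp fun i => |v i| ^ 2
  have hw : ∑ i, |w i| ^ 2 = ∑ i, ‖w i‖ ^ 2 := rfl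
  calc ∑ i, |v (e i)| * |w i|
      ≤ √(∑ i, |v (e i)| ^ 2) * √(∑ i, |w i| ^ 2) := Real.sum_mul_le_sqrt_mul_sqrt _ _ _
    _ = ‖v‖ * ‖w‖ := by rw [hv, hw, norm_eq, norm_eq]

end EuclideanSpace

lemma ZMod.castHom_eq_zero_iff {m n : ℕ} [NeZero n] (h : m ∣ n) (c : ZMod n) :
    ZMod.castHom h (ZMod m) c = 0 ↔ c.val % m = 0 := by
  rw [ZMod.castHom_apply, ZMod.cast_eq_val, ZMod.natCast_eq_zero_iff, Nat.dvd_iff_mod_eq_zero]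

section L96

variable {J : ℕ} [NeZero J]

lemma L96P_apply_of_castHom_ne_zero (h3 : 3 ∣ J) (u : EuclideanSpace ℝ (ZMod J)) {j : ZMod J}
    (hj : ZMod.castHom h3 (ZMod 3) j ≠ 0) : L96P u j = u j := by
  simp [L96P, (ZMod.castHom_eq_zero_iff h3 j).not.mp hj]

lemma abs_mul_le_norm_mul_L96P (h3 : 3 ∣ J) (u : EuclideanSpace ℝ (ZMod J)) {a b : ZMod J}
    (hab : ZMod.castHom h3 (ZMod 3) (a - b) ≠ 0) :
    |u a * u b| ≤ ‖u‖ * (|L96P u a| + |L96P u b|) := by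
  have hu : ∀ j, |u j| ≤ ‖u‖ := PiLp.norm_apply_le u
  rw [abs_mul]
  by_cases ha : ZMod.castHom h3 (ZMod 3) a = 0
  · have hb : ZMod.castHom h3 (ZMod 3) b ≠ 0 := by
      rwa [map_sub, ha, zero_sub, neg_ne_zero] at hab
    rw [← L96P_apply_of_castHom_ne_zero h3 u hb]
    nlinarith [abs_nonneg (L96P u a), abs_nonneg (L96P u b), norm_nonneg u, hu a]
  · rw [← L96P_apply_of_castHom_ne_zero h3 u ha]
    nlinarith [abs_nonneg (L96P u a), abs_nonneg (L96P u b), norm_nonneg u, hu b]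

lemma L96B_self_apply (u : EuclideanSpace ℝ (ZMod J)) (j : ZMod J) :
    L96B u u j = u (j - 2) * u (j - 1) - u (j - 1) * u (j + 1) := by
  simp only [L96B, PiLp.toLp_apply]
  ring

lemma abs_L96B_self_apply_le (h3 : 3 ∣ J) (u : EuclideanSpace ℝ (ZMod J)) (j : ZMod J) :
    |L96B u u j| ≤
      ‖u‖ * (|L96P u (j - 2)| + 2 * |L96P u (j - 1)| + |L96P u (j + 1)|) := by
  have h₁ := abs_mul_le_norm_mul_L96P h3 u (a := j - 2) (b := j - 1) (by
    rw [show j - 2 - (j - 1) = -1 by ring, map_neg, map_one]; decide)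
  have h₂ := abs_mul_le_norm_mul_L96P h3 u (a := j - 1) (b := j + 1) (by
    rw [show j - 1 - (j + 1) = -2 by ring, map_neg, map_ofNat]; decide)
  rw [L96B_self_apply]
  linarith [abs_sub (u (j - 2) * u (j - 1)) (u (j - 1) * u (j + 1))]

lemma abs_inner_L96B_self_le (h3 : 3 ∣ J) (u w : EuclideanSpace ℝ (ZMod J)) :
    |⟪L96B u u, w⟫| ≤ 4 * ‖u‖ * ‖w‖ * ‖L96P u‖ := by
  set v := L96P u
  have hshift (e : ZMod J ≃ ZMod J) := EuclideanSpace.sum_abs_comp_mul_abs_le v w e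
  have h₂ := hshift (Equiv.subRight 2)
  have h₁ := hshift (Equiv.subRight 1)
  have h₀ := hshift (Equiv.addRight 1)
  simp only [Equiv.subRight_apply, Equiv.coe_addRight] at h₂ h₁ h₀
  calc |⟪L96B u u, w⟫|
      ≤ ∑ j, |L96B u u j| * |w j| := EuclideanSpace.abs_inner_le_sum_abs_mul_abs _ _
    _ ≤ ∑ j, ‖u‖ * (|v (j - 2)| + 2 * |v (j - 1)| + |v (j + 1)|) * |w j| :=
        Finset.sum_le_sum fun j _ =>
          mul_le_mul_of_nonneg_right (abs_L96B_self_apply_le h3 u j) (abs_nonneg _)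
    _ = ‖u‖ * (∑ j, |v (j - 2)| * |w j| + 2 * ∑ j, |v (j - 1)| * |w j|
          + ∑ j, |v (j + 1)| * |w j|) := by
        simp only [Finset.mul_sum, ← Finset.sum_add_distrib]
        exact Finset.sum_congr rfl fun j _ => by ring
    _ ≤ ‖u‖ * (‖v‖ * ‖w‖ + 2 * (‖v‖ * ‖w‖) + ‖v‖ * ‖w‖) := by gcongr
    _ = 4 * ‖u‖ * ‖w‖ * ‖v‖ := by ring

end L96

theorem l96_key_estimate_general {J J' : ℕ} [NeZero J] (hJ : J = 3 * J') :
    ∃ c : ℝ, 0 < c ∧ ∀ u w : EuclideanSpace ℝ (ZMod J),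
      |⟪L96B u u, w⟫| ≤ c * ‖u‖ * ‖w‖ * ‖L96P u‖ :=
  ⟨4, by norm_num, abs_inner_L96B_self_le ⟨J', hJ⟩⟩

/-- there is `c > 0` with `|⟨B(u,u), w⟩| ≤ c|u||w||Pu|` for all `u,w`. -/
theorem l96_key_estimate {J J' : ℕ} [NeZero J] (hJ' : 1 ≤ J') (hJ : J = 3 * J') :
    ∃ c : ℝ, 0 < c ∧ ∀ u w : EuclideanSpace ℝ (ZMod J),
      |⟪L96B u u, w⟫| ≤ c * ‖u‖ * ‖w‖ * ‖L96P u‖ :=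
  l96_key_estimate_general hJ
end
end

section
/- (Exact exponential decay of the synchronization error.) Let v be any solution of the Lorenz '96 equation on [0,∞). Let q : [0,∞) → ℝ^J be differentiable with q(0) = Qq(0) and q'(t) = −q(t) − Q·B(Pv(t)+q(t), Pv(t)+q(t)) + Qf for all t ≥ 0, and set m(t) = Pv(t) + q(t). Then for all t ≥ 0, |m(t) − v(t)|² = |m(0) − v(0)|²·e^{−2t}. -/
/-!
The `P`-part of `q` solves `(Pq)' = -Pq` with `Pq(0) = 0`, so it vanishes and `m = Pv + q`
agrees with `v` on every coordinate kept by `P`. At a coordinate `j ≡ 0 (mod 3)`, `B(u,u)^(j)`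
reads `u` only at `j-2, j-1, j+1`, which `P` keeps when `3 ∣ J`; hence `QB(m,m) = QB(v,v)`, the
error `m - v` solves `e' = -e` exactly, and `e(t) = e^{-t} e(0)`.
-/

open scoped RealInnerProductSpace

noncomputable section

section Coordinates

variable {J : ℕ} [NeZero J]

theorem val_mod_three_eq_val_castHom (h3 : 3 ∣ J) (j : ZMod J) :
    j.val % 3 = (ZMod.castHom h3 (ZMod 3) j).val := by
  rw [ZMod.castHom_apply, ZMod.cast_eq_val, ZMod.val_natCast]

/-- The coordinates that `L96B` reads at a coordinate `j ≡ 0 (mod 3)` are all kept by `L96P`. -/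
theorem val_mod_three_ne_zero_of_neighbour (h3 : 3 ∣ J) {j : ZMod J} (hj : j.val % 3 = 0) :
    (j + 1).val % 3 ≠ 0 ∧ (j - 1).val % 3 ≠ 0 ∧ (j - 2).val % 3 ≠ 0 := by
  simp only [val_mod_three_eq_val_castHom h3, map_add, map_sub, map_one, map_ofNat,
    ZMod.val_eq_zero] at hj ⊢
  rw [hj]
  decide

theorem L96P_apply (u : EuclideanSpace ℝ (ZMod J)) (j : ZMod J) :
    L96P u j = if j.val % 3 = 0 then 0 else u j := rfl

theorem L96Q_apply (u : EuclideanSpace ℝ (ZMod J)) (j : ZMod J) :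
    L96Q u j = if j.val % 3 = 0 then u j else 0 := by
  simp only [L96Q, PiLp.sub_apply, L96P_apply]
  split_ifs <;> ring

theorem L96P_L96P (u : EuclideanSpace ℝ (ZMod J)) : L96P (L96P u) = L96P u := by
  ext j
  simp only [L96P_apply]
  split_ifs <;> rfl

theorem L96P_L96Q (u : EuclideanSpace ℝ (ZMod J)) : L96P (L96Q u) = 0 := by
  ext j
  simp only [L96P_apply, L96Q_apply, PiLp.zero_apply]
  split_ifs <;> rfl

theorem L96Q_L96B_eq_of_L96P_eq (h3 : 3 ∣ J) {u u' w w' : EuclideanSpace ℝ (ZMod J)}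
    (hu : L96P u = L96P u') (hw : L96P w = L96P w') :
    L96Q (L96B u w) = L96Q (L96B u' w') := by
  have kept : ∀ {x x' : EuclideanSpace ℝ (ZMod J)}, L96P x = L96P x' →
      ∀ k : ZMod J, k.val % 3 ≠ 0 → x k = x' k := fun h k hk => by
    simpa only [L96P_apply, if_neg hk] using congrArg (· k) h
  ext j
  simp only [L96Q_apply]
  split_ifs with hj
  · obtain ⟨h₁, h₂, h₃⟩ := val_mod_three_ne_zero_of_neighbour h3 hj
    simp only [L96B, kept hu _ h₁, kept hu _ h₂, kept hu _ h₃, kept hw _ h₁, kept hw _ h₂,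
      kept hw _ h₃]
  · rfl

variable (J) in
def L96PCLM : EuclideanSpace ℝ (ZMod J) →L[ℝ] EuclideanSpace ℝ (ZMod J) :=
  LinearMap.toContinuousLinearMap
    { toFun := L96P
      map_add' := fun u w => by
        ext j
        simp only [L96P_apply, PiLp.add_apply]
        split_ifs <;> simp
      map_smul' := fun c u => by
        ext j
        simp only [L96P_apply, PiLp.smul_apply, smul_eq_mul, RingHom.id_apply]
        split_ifs <;> simp }

theorem L96PCLM_apply (u : EuclideanSpace ℝ (ZMod J)) : L96PCLM J u = L96P u := rfl

theorem L96P_add (u w : EuclideanSpace ℝ (ZMod J)) : L96P (u + w) = L96P u + L96P w :=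
  map_add (L96PCLM J) u w

theorem L96P_sub (u w : EuclideanSpace ℝ (ZMod J)) : L96P (u - w) = L96P u - L96P w :=
  map_sub (L96PCLM J) u w

theorem L96P_neg (u : EuclideanSpace ℝ (ZMod J)) : L96P (-u) = -L96P u :=
  map_neg (L96PCLM J) u

end Coordinates

theorem eq_exp_neg_smul_of_hasDerivAt_neg {E : Type*} [NormedAddCommGroup E] [NormedSpace ℝ E]
    {g : ℝ → E} (hg : ∀ t, 0 ≤ t → HasDerivAt g (-g t) t) {t : ℝ} (ht : 0 ≤ t) :
    g t = Real.exp (-t) • g 0 := by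
  have hderiv : ∀ s, 0 ≤ s → HasDerivAt (fun r => Real.exp r • g r) 0 s := fun s hs => by
    have := (Real.hasDerivAt_exp s).smul (hg s hs)
    rwa [smul_neg, neg_add_cancel] at this
  have hconst := constant_of_has_deriv_right_zero (a := 0) (b := t)
    (fun s hs => (hderiv s hs.1).continuousAt.continuousWithinAt)
    (fun s hs => (hderiv s hs.1).hasDerivWithinAt) t ⟨ht, le_rfl⟩
  simp only [Real.exp_zero, one_smul] at hconst
  rw [← hconst, smul_smul, ← Real.exp_add, neg_add_cancel, Real.exp_zero, one_smul]

theorem l96_sync_error_decay_general {J J' : ℕ} [NeZero J] (hJ : J = 3 * J')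
    (F : ℝ)
    (v q : ℝ → EuclideanSpace ℝ (ZMod J))
    (hv : L96Sol F (Set.Ici 0) v)
    (hq0 : q 0 = L96Q (q 0))
    (hq : ∀ t : ℝ, 0 ≤ t → HasDerivAt q
      (-q t - L96Q (L96B (L96P (v t) + q t) (L96P (v t) + q t)) + L96Q (L96f F)) t) :
    ∀ t : ℝ, 0 ≤ t →
      ‖(L96P (v t) + q t) - v t‖ ^ 2 =
        ‖(L96P (v 0) + q 0) - v 0‖ ^ 2 * Real.exp (-2 * t) := by
  have h3 : 3 ∣ J := ⟨J', hJ⟩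
  have hPq : ∀ t, 0 ≤ t → L96P (q t) = 0 := fun t ht => by
    have hdecay : ∀ s, 0 ≤ s → HasDerivAt (fun r => L96P (q r)) (-L96P (q s)) s := fun s hs => by
      simpa only [Function.comp_def, L96PCLM_apply, L96P_add, L96P_sub, L96P_neg, L96P_L96Q, sub_zero,
        add_zero] using (L96PCLM J).hasFDerivAt.comp_hasDerivAt s (hq s hs)
    rw [eq_exp_neg_smul_of_hasDerivAt_neg hdecay ht, hq0, L96P_L96Q, smul_zero]
  have herr : ∀ t, 0 ≤ t → HasDerivAt (fun r => L96P (v r) + q r - v r)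
      (-(L96P (v t) + q t - v t)) t := fun t ht => by
    have hB : L96Q (L96B (L96P (v t) + q t) (L96P (v t) + q t)) = L96Q (L96B (v t) (v t)) := by
      have hm : L96P (L96P (v t) + q t) = L96P (v t) := by
        rw [L96P_add, L96P_L96P, hPq t ht, add_zero]
      exact L96Q_L96B_eq_of_L96P_eq h3 hm hm
    refine ((((L96PCLM J).hasFDerivAt.comp_hasDerivAt t (hv t ht)).add (hq t ht)).sub
      (hv t ht)).congr_deriv ?_
    rw [hB]
    simp only [L96PCLM_apply, L96P_add, L96P_sub, L96P_neg, L96Q]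
    abel
  intro t ht
  rw [eq_exp_neg_smul_of_hasDerivAt_neg herr ht, norm_smul, mul_pow, Real.norm_eq_abs,
    abs_of_pos (Real.exp_pos _), ← Real.exp_nat_mul, mul_comm]
  norm_num

/-- exact exponential decay of the synchronization error:
`|m(t) − v(t)|² = |m(0) − v(0)|² e^{−2t}`, where `m = Pv + q`. -/
theorem l96_sync_error_decay {J J' : ℕ} [NeZero J] (hJ' : 1 ≤ J') (hJ : J = 3 * J')
    (F : ℝ)
    (v q : ℝ → EuclideanSpace ℝ (ZMod J))
    (hv : L96Sol F (Set.Ici 0) v)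
    (hq0 : q 0 = L96Q (q 0))
    (hq : ∀ t : ℝ, 0 ≤ t → HasDerivAt q
      (-q t - L96Q (L96B (L96P (v t) + q t) (L96P (v t) + q t)) + L96Q (L96f F)) t) :
    ∀ t : ℝ, 0 ≤ t →
      ‖(L96P (v t) + q t) - v t‖ ^ 2 =
        ‖(L96P (v 0) + q 0) - v 0‖ ^ 2 * Real.exp (-2 * t) :=
  l96_sync_error_decay_general hJ F v q hv hq0 hq
end
end
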